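/- arXiv:2305.00743 — 2 statements merged into one kernel-verified Lean document; each statement's English description precedes it below -/
import Mathlib

section
/- The number of connected components of the amoeba complement ℝ^n ∖ 𝒜_p is at least equal to the number of vertices (extreme points) of the Newton polytope 𝒩_p. -/
open MeasureTheory Real

noncomputable section

/-- Evaluation of the Laurent polynomial with support `A` and coefficients `c`
at the point `z`. -/
def lEval {n : ℕ} (A : Finset (Fin n → ℤ)) (c : (Fin n → ℤ) → ℂ)
    (z : Fin n → ℂ) : ℂ :=
  ∑ α ∈ A, c α * ∏ i, z i ^ α i

/-- The coordinatewise logarithm of moduli. -/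
def logMap {n : ℕ} (z : Fin n → ℂ) : Fin n → ℝ :=
  fun i => Real.log ‖z i‖

/-- The amoeba of the Laurent polynomial with support `A` and coefficients `c`. -/
def amoeba {n : ℕ} (A : Finset (Fin n → ℤ)) (c : (Fin n → ℤ) → ℂ) :
    Set (Fin n → ℝ) :=
  logMap '' {z | (∀ i, z i ≠ 0) ∧ lEval A c z = 0}

/-- The point of the complex torus with radial coordinates `e^u` and angles `θ`. -/
def tPt {n : ℕ} (u θ : Fin n → ℝ) : Fin n → ℂ :=
  fun i => Complex.exp (u i + θ i * Complex.I)

/-- The cube `[0, 2π]^n`. -/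
def cube (n : ℕ) : Set (Fin n → ℝ) := Set.univ.pi fun _ => Set.Icc 0 (2 * π)

/-- The order vector of a point `u` in the amoeba complement. -/
def order {n : ℕ} (A : Finset (Fin n → ℤ)) (c : (Fin n → ℤ) → ℂ)
    (u : Fin n → ℝ) : Fin n → ℂ := fun j =>
  (((2 * π) ^ n : ℝ) : ℂ)⁻¹ *
    ∫ θ in cube n,
      (∑ α ∈ A, c α * (α j : ℂ) * ∏ i, tPt u θ i ^ α i) / lEval A c (tPt u θ)

/-- The Ronkin function. -/
def ronkin {n : ℕ} (A : Finset (Fin n → ℤ)) (c : (Fin n → ℤ) → ℂ)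
    (x : Fin n → ℝ) : ℝ :=
  ((2 * π) ^ n)⁻¹ * ∫ θ in cube n, Real.log ‖lEval A c (tPt x θ)‖

/-- The Newton polytope of the support `A`. -/
def newton {n : ℕ} (A : Finset (Fin n → ℤ)) : Set (Fin n → ℝ) :=
  convexHull ℝ ((fun (α : Fin n → ℤ) (i : Fin n) => (α i : ℝ)) '' (A : Set (Fin n → ℤ)))

end

/-!
Let `α` be a vertex of the Newton polytope and `w` a direction exposing it. Far out along `w`
the term `c_α z^α` dominates the sum of all the others, so such points `u` lie outside the amoeba.
For `u` outside the amoeba and each coordinate `j`, the loop `t ↦ p(e^{u + i t e_j})` avoids `0`;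
its winding number is a continuous integer-valued function of `u`, hence constant on each
component of the complement. Where `c_α z^α` dominates, shrinking the other coefficients to `0`
shows that this winding number is `α_j`. So points attached to distinct vertices have distinct
winding vectors and lie in distinct components.
-/

open Complex

/-- `2πi` times the winding number of the loop `H` around `0`. -/
noncomputable def windingIntegral (H : ℝ → ℂ) : ℂ := ∫ t in (0 : ℝ)..2 * π, deriv H t / H t

theorem intervalIntegral_deriv_div_mem_zmultiples {H : ℝ → ℂ} (hH : ContDiff ℝ 1 H)
    (hne : ∀ t, H t ≠ 0) {a b : ℝ} (hab : H b = H a) :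
    ∫ t in a..b, deriv H t / H t ∈ AddSubgroup.zmultiples (2 * π * I) := by
  have hcont : Continuous fun t => deriv H t / H t :=
    (hH.continuous_deriv le_rfl).div hH.continuous hne
  set F : ℝ → ℂ := fun s => ∫ t in a..s, deriv H t / H t
  have hF : ∀ s, HasDerivAt F (deriv H s / H s) s := fun s =>
    intervalIntegral.integral_hasDerivAt_right (hcont.intervalIntegrable a s)
      (hcont.stronglyMeasurableAtFilter _ _) hcont.continuousAt
  -- `F` is a logarithm of `H` up to a constant factor: `H e^{-F}` is constant.
  have hconst : ∀ s, HasDerivAt (fun s => H s * Complex.exp (-F s)) 0 s := fun s => by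
    refine ((hH.differentiable one_ne_zero s).hasDerivAt.mul (hF s).neg.cexp).congr_deriv ?_
    field_simp [hne s]
    ring
  have hba := is_const_of_deriv_eq_zero (fun s => (hconst s).differentiableAt)
    (fun s => (hconst s).deriv) b a
  simp only [F, intervalIntegral.integral_same, neg_zero, Complex.exp_zero, mul_one, hab] at hba
  obtain ⟨k, hk⟩ := Complex.exp_eq_one_iff.mp ((mul_eq_left₀ (hne a)).mp hba)
  exact ⟨-k, by simp only [zsmul_eq_mul, Int.cast_neg, neg_mul, ← hk, neg_neg]⟩

theorem Finset.sum_ne_zero_of_sum_erase_norm_lt {κ E : Type*} [DecidableEq κ]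
    [SeminormedAddCommGroup E] {s : Finset κ} {f : κ → E} {α : κ} (hα : α ∈ s)
    (h : ∑ β ∈ s.erase α, ‖f β‖ < ‖f α‖) : ∑ β ∈ s, f β ≠ 0 := by
  intro hzero
  rw [← Finset.add_sum_erase s f hα, add_eq_zero_iff_eq_neg] at hzero
  have := norm_sum_le (s.erase α) f
  rw [hzero, norm_neg] at h
  linarith

theorem Set.Finite.exists_forall_lt_of_mem_extremePoints_convexHull {E : Type*}
    [NormedAddCommGroup E] [NormedSpace ℝ E] {S : Set E} (hS : S.Finite) {x : E}
    (hx : x ∈ (convexHull ℝ S).extremePoints ℝ) :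
    ∃ f : StrongDual ℝ E, ∀ y ∈ S, y ≠ x → f y < f x := by
  have hxS : x ∉ convexHull ℝ (S \ {x}) := fun hmem =>
    ((convex_convexHull ℝ S).mem_extremePoints_iff_mem_sdiff_convexHull_sdiff.mp hx).2 <|
      convexHull_mono (Set.sdiff_subset_sdiff_left (subset_convexHull ℝ S)) hmem
  obtain ⟨f, r, hf, hr⟩ := geometric_hahn_banach_closed_point (convex_convexHull ℝ _)
    (hS.sdiff.isCompact_convexHull (𝕜 := ℝ)).isClosed hxS
  exact ⟨f, fun y hy hyx => (hf y (subset_convexHull ℝ _ ⟨hy, hyx⟩)).trans hr⟩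

theorem hasDerivAt_exp_int_mul_I (k : ℤ) (t : ℝ) :
    HasDerivAt (fun t : ℝ => Complex.exp (k * t * I)) (Complex.exp (k * t * I) * (k * I)) t := by
  refine HasDerivAt.cexp ?_
  simpa using ((hasDerivAt_id (t : ℂ)).comp_ofReal.const_mul (k : ℂ)).mul_const I

theorem windingIntegral_monomial {c : ℂ} (hc : c ≠ 0) (k : ℤ) :
    windingIntegral (fun t => c * Complex.exp (k * t * I)) = k * (2 * π * I) := by
  have hderiv : ∀ t, deriv (fun t : ℝ => c * Complex.exp (k * t * I)) t /
      (c * Complex.exp (k * t * I)) = k * I := fun t => by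
    rw [((hasDerivAt_exp_int_mul_I k t).const_mul c).deriv]
    field_simp [Complex.exp_ne_zero]
  simp only [windingIntegral, hderiv, intervalIntegral.integral_const, sub_zero, real_smul]
  push_cast
  ring

section TrigPoly

variable {κ : Type*} (s : Finset κ) (m : κ → ℤ)

noncomputable def trigPoly (a : κ → ℂ) (t : ℝ) : ℂ :=
  ∑ β ∈ s, a β * Complex.exp (m β * t * I)

theorem hasDerivAt_trigPoly (a : κ → ℂ) (t : ℝ) :
    HasDerivAt (trigPoly s m a)
      (∑ β ∈ s, a β * (Complex.exp (m β * t * I) * (m β * I))) t :=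
  HasDerivAt.fun_sum fun β _ => (hasDerivAt_exp_int_mul_I (m β) t).const_mul (a β)

theorem contDiff_trigPoly (a : κ → ℂ) : ContDiff ℝ 1 (trigPoly s m a) := by
  refine ContDiff.sum fun β _ => contDiff_const.mul (ContDiff.cexp ?_)
  exact (contDiff_const.mul ofRealCLM.contDiff).mul contDiff_const

theorem trigPoly_two_pi (a : κ → ℂ) : trigPoly s m a (2 * π) = trigPoly s m a 0 := by
  refine Finset.sum_congr rfl fun β _ => ?_
  have : (m β : ℂ) * ((2 * π : ℝ) : ℂ) * I = m β * (2 * π * I) := by push_cast; ring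
  rw [this, Complex.exp_int_mul_two_pi_mul_I, ofReal_zero, mul_zero, zero_mul, Complex.exp_zero]

theorem windingIntegral_trigPoly_mem_zmultiples (a : κ → ℂ)
    (hne : ∀ t, trigPoly s m a t ≠ 0) :
    windingIntegral (trigPoly s m a) ∈ AddSubgroup.zmultiples (2 * π * I) :=
  intervalIntegral_deriv_div_mem_zmultiples (contDiff_trigPoly s m a) hne
    (trigPoly_two_pi s m a)

theorem continuous_windingIntegral_trigPoly {X : Type*} [TopologicalSpace X] {a : X → κ → ℂ}
    (ha : Continuous a) (hne : ∀ x t, trigPoly s m (a x) t ≠ 0) :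
    Continuous fun x => windingIntegral (trigPoly s m (a x)) := by
  have hderiv : ∀ x, deriv (trigPoly s m (a x)) =
      fun t : ℝ => ∑ β ∈ s, a x β * (Complex.exp (m β * t * I) * (m β * I)) :=
    fun x => funext fun t => (hasDerivAt_trigPoly s m (a x) t).deriv
  simp only [windingIntegral, hderiv]
  refine intervalIntegral.continuous_parametric_intervalIntegral_of_continuous'
    (f := fun x t => (∑ β ∈ s, a x β * (Complex.exp (m β * t * I) * (m β * I))) /
      trigPoly s m (a x) t)
    (Continuous.div ?_ ?_ fun p => hne p.1 p.2) _ _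
  · fun_prop
  · simp only [trigPoly]
    fun_prop

theorem IsPreconnected.windingIntegral_trigPoly_eq {X : Type*} [TopologicalSpace X]
    {S : Set X} (hS : IsPreconnected S) {a : X → κ → ℂ} (ha : Continuous a)
    (hne : ∀ x ∈ S, ∀ t, trigPoly s m (a x) t ≠ 0) {x y : X} (hx : x ∈ S) (hy : y ∈ S) :
    windingIntegral (trigPoly s m (a x)) = windingIntegral (trigPoly s m (a y)) := by
  refine hS.constant_of_mapsTo (f := fun x => windingIntegral (trigPoly s m (a x)))
    (T := AddSubgroup.zmultiples (2 * π * I))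
    (isDiscrete_iff_discreteTopology.mpr (NormedSpace.discreteTopology_zmultiples _)) ?_
    (fun x hx => windingIntegral_trigPoly_mem_zmultiples s m _ (hne x hx)) hx hy
  rw [continuousOn_iff_continuous_domRestrict]
  exact continuous_windingIntegral_trigPoly s m (ha.comp continuous_subtype_val)
    fun x => hne x x.2

variable [DecidableEq κ]

theorem trigPoly_ne_zero_of_dominant {a : κ → ℂ} {α : κ} (hα : α ∈ s)
    (h : ∑ β ∈ s.erase α, ‖a β‖ < ‖a α‖) (t : ℝ) : trigPoly s m a t ≠ 0 := by
  have hnorm : ∀ β, ‖a β * Complex.exp (m β * t * I)‖ = ‖a β‖ := fun β => by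
    simp [Complex.norm_exp]
  exact Finset.sum_ne_zero_of_sum_erase_norm_lt hα (by simpa only [hnorm] using h)

theorem windingIntegral_trigPoly_of_dominant {a : κ → ℂ} {α : κ} (hα : α ∈ s)
    (h : ∑ β ∈ s.erase α, ‖a β‖ < ‖a α‖) :
    windingIntegral (trigPoly s m a) = m α * (2 * π * I) := by
  -- Shrink all coefficients but `a α` linearly to `0`; `α` stays dominant along the way.
  set b : ℝ → κ → ℂ := fun r β => if β = α then a β else r * a β
  have hb : Continuous b := continuous_pi fun β => by
    by_cases hβ : β = α <;> simp only [b, hβ, if_true, if_false] <;> fun_prop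
  have hne : ∀ r ∈ Set.Icc (0 : ℝ) 1, ∀ t, trigPoly s m (b r) t ≠ 0 := by
    rintro r ⟨hr0, hr1⟩
    refine trigPoly_ne_zero_of_dominant s m hα (lt_of_le_of_lt ?_ (by simpa [b] using h))
    refine Finset.sum_le_sum fun β hβ => ?_
    simp only [b, if_neg (Finset.ne_of_mem_erase hβ), norm_mul, Complex.norm_real,
      Real.norm_of_nonneg hr0]
    exact mul_le_of_le_one_left (norm_nonneg _) hr1
  have hb1 : b 1 = a := by
    ext β
    by_cases hβ : β = α <;> simp [b, hβ]
  have hb0 : trigPoly s m (b 0) = fun t : ℝ => a α * Complex.exp (m α * t * I) :=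
    funext fun t => (Finset.sum_eq_single_of_mem α hα fun β _ hβ => by simp [b, hβ]).trans
      (by simp [b])
  have haα : a α ≠ 0 := norm_pos_iff.mp ((Finset.sum_nonneg fun _ _ => norm_nonneg _).trans_lt h)
  rw [← hb1, isPreconnected_Icc.windingIntegral_trigPoly_eq s m hb hne
    (Set.right_mem_Icc.2 zero_le_one) (Set.left_mem_Icc.2 zero_le_one), hb0,
    windingIntegral_monomial haα]

end TrigPoly

section Amoeba

variable {n : ℕ} (A : Finset (Fin n → ℤ)) (c : (Fin n → ℤ) → ℂ)

theorem exists_dotProduct_lt_of_mem_extremePoints_newton {v : Fin n → ℝ}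
    (hv : v ∈ (newton A).extremePoints ℝ) :
    ∃ α ∈ A, Int.cast ∘ α = v ∧ ∃ w : Fin n → ℝ,
      ∀ β ∈ A, β ≠ α → (Int.cast ∘ β) ⬝ᵥ w < (Int.cast ∘ α) ⬝ᵥ w := by
  obtain ⟨α, hα, rfl⟩ := extremePoints_convexHull_subset hv
  obtain ⟨f, hf⟩ := ((A.finite_toSet).image _).exists_forall_lt_of_mem_extremePoints_convexHull hv
  refine ⟨α, hα, rfl, (dotProductEquiv ℝ (Fin n)).symm f.toLinearMap, fun β hβ hβα => ?_⟩
  have hf' : ∀ y, y ⬝ᵥ (dotProductEquiv ℝ (Fin n)).symm f.toLinearMap = f y := fun y => by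
    rw [dotProduct_comm]
    exact congrArg (· y) ((dotProductEquiv ℝ (Fin n)).apply_symm_apply f.toLinearMap)
  rw [hf', hf']
  exact hf _ ⟨β, hβ, rfl⟩ fun h => hβα (Int.cast_injective.comp_left h)

/-- `torusCoeff c u β` is the coefficient of `e^{i⟨β, θ⟩}` in `θ ↦ p(e^{u + iθ})`. -/
noncomputable def torusCoeff (u : Fin n → ℝ) (β : Fin n → ℤ) : ℂ :=
  c β * Complex.exp (((Int.cast ∘ β) ⬝ᵥ u : ℝ) : ℂ)

theorem norm_torusCoeff (u : Fin n → ℝ) (β : Fin n → ℤ) :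
    ‖torusCoeff c u β‖ = ‖c β‖ * Real.exp ((Int.cast ∘ β) ⬝ᵥ u) := by
  rw [torusCoeff, norm_mul, Complex.norm_exp_ofReal]

theorem continuous_torusCoeff : Continuous (torusCoeff c) := by
  unfold torusCoeff
  fun_prop

theorem norm_prod_zpow_eq_exp {z : Fin n → ℂ} (hz : ∀ i, z i ≠ 0) (β : Fin n → ℤ) :
    ‖∏ i, z i ^ β i‖ = Real.exp ((Int.cast ∘ β) ⬝ᵥ logMap z) := by
  simp only [norm_prod, norm_zpow, dotProduct, Function.comp_apply, logMap, Real.exp_sum,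
    mul_comm (β _ : ℝ), Real.exp_mul, Real.exp_log (norm_pos_iff.mpr (hz _)), Real.rpow_intCast]

theorem logMap_tPt (u θ : Fin n → ℝ) : logMap (tPt u θ) = u := by
  ext i
  simp [logMap, tPt, Complex.norm_exp]

theorem prod_tPt_zpow (u θ : Fin n → ℝ) (β : Fin n → ℤ) :
    ∏ i, tPt u θ i ^ β i =
      Complex.exp (((Int.cast ∘ β) ⬝ᵥ u : ℝ) + ((Int.cast ∘ β) ⬝ᵥ θ : ℝ) * I) := by
  simp only [tPt, ← Complex.exp_int_mul, ← Complex.exp_sum, dotProduct, Function.comp_apply]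
  push_cast
  rw [Finset.sum_mul, ← Finset.sum_add_distrib]
  exact congrArg Complex.exp (Finset.sum_congr rfl fun i _ => by ring)

theorem lEval_tPt_single (u : Fin n → ℝ) (j : Fin n) (t : ℝ) :
    lEval A c (tPt u (Pi.single j t)) = trigPoly A (· j) (torusCoeff c u) t := by
  refine Finset.sum_congr rfl fun β _ => ?_
  rw [prod_tPt_zpow, dotProduct_single, Complex.exp_add, torusCoeff, mul_assoc]
  simp only [Function.comp_apply, ofReal_mul, ofReal_intCast]

theorem notMem_amoeba_of_dominant {α : Fin n → ℤ} (hα : α ∈ A) {u : Fin n → ℝ}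
    (h : ∑ β ∈ A.erase α, ‖torusCoeff c u β‖ < ‖torusCoeff c u α‖) : u ∉ amoeba A c := by
  rintro ⟨z, ⟨hz, hzero⟩, rfl⟩
  refine Finset.sum_ne_zero_of_sum_erase_norm_lt hα ?_ hzero
  simpa only [norm_mul, norm_prod_zpow_eq_exp hz, norm_torusCoeff] using h

theorem trigPoly_torusCoeff_ne_zero {u : Fin n → ℝ} (hu : u ∉ amoeba A c) (j : Fin n) (t : ℝ) :
    trigPoly A (· j) (torusCoeff c u) t ≠ 0 := by
  rw [← lEval_tPt_single]
  exact fun h => hu ⟨_, ⟨fun i => Complex.exp_ne_zero _, h⟩, logMap_tPt u _⟩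

theorem IsPreconnected.windingIntegral_trigPoly_torusCoeff_eq {S : Set (Fin n → ℝ)}
    (hS : IsPreconnected S) (hSA : S ⊆ (amoeba A c)ᶜ) {u v : Fin n → ℝ} (hu : u ∈ S)
    (hv : v ∈ S) (j : Fin n) :
    windingIntegral (trigPoly A (· j) (torusCoeff c u)) =
      windingIntegral (trigPoly A (· j) (torusCoeff c v)) :=
  hS.windingIntegral_trigPoly_eq A (· j) (continuous_torusCoeff c)
    (fun _ hx => trigPoly_torusCoeff_ne_zero A c (hSA hx) j) hu hv

theorem exists_torusCoeff_dominant {α : Fin n → ℤ} (hcα : c α ≠ 0)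
    {w : Fin n → ℝ} (hw : ∀ β ∈ A, β ≠ α → (Int.cast ∘ β) ⬝ᵥ w < (Int.cast ∘ α) ⬝ᵥ w) :
    ∃ u, ∑ β ∈ A.erase α, ‖torusCoeff c u β‖ < ‖torusCoeff c u α‖ := by
  -- Along `u = r • w`, every other term decays like `e^{-δ r}` relative to the `α` term.
  set g : ℝ → ℝ := fun r =>
    ∑ β ∈ A.erase α, ‖c β‖ * Real.exp (r * ((Int.cast ∘ β) ⬝ᵥ w - (Int.cast ∘ α) ⬝ᵥ w))
  have hg : Filter.Tendsto g Filter.atTop (nhds 0) := by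
    rw [← Finset.sum_const_zero (s := A.erase α)]
    refine tendsto_finsetSum _ fun β hβ => ?_
    have hδ := sub_neg.mpr (hw β (Finset.mem_of_mem_erase hβ) (Finset.ne_of_mem_erase hβ))
    simpa using ((Real.tendsto_exp_atBot.comp
      (Filter.tendsto_id.atTop_mul_const_of_neg hδ)).const_mul ‖c β‖)
  obtain ⟨r, hr⟩ := (hg.eventually_lt_const (norm_pos_iff.mpr hcα)).exists
  refine ⟨r • w, ?_⟩
  have hexp : ∀ β : Fin n → ℤ, Real.exp ((Int.cast ∘ β) ⬝ᵥ (r • w)) =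
      Real.exp (r * ((Int.cast ∘ β) ⬝ᵥ w - (Int.cast ∘ α) ⬝ᵥ w)) *
        Real.exp ((Int.cast ∘ α) ⬝ᵥ (r • w)) := fun β => by
    rw [← Real.exp_add, dotProduct_smul, dotProduct_smul, smul_eq_mul, smul_eq_mul]
    ring_nf
  calc ∑ β ∈ A.erase α, ‖torusCoeff c (r • w) β‖
      = g r * Real.exp ((Int.cast ∘ α) ⬝ᵥ (r • w)) := by
        rw [Finset.sum_mul]
        exact Finset.sum_congr rfl fun β _ => by rw [norm_torusCoeff, hexp β, mul_assoc]
    _ < ‖c α‖ * Real.exp ((Int.cast ∘ α) ⬝ᵥ (r • w)) :=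
        mul_lt_mul_of_pos_right hr (Real.exp_pos _)
    _ = ‖torusCoeff c (r • w) α‖ := (norm_torusCoeff c _ α).symm

end Amoeba

theorem stmt_1_general {n : ℕ} (A : Finset (Fin n → ℤ)) (c : (Fin n → ℤ) → ℂ)
    (hc : ∀ α ∈ A, c α ≠ 0) :
    ∃ f : {v : Fin n → ℝ // v ∈ Set.extremePoints ℝ (newton A)} →
      {C : Set (Fin n → ℝ) //
        ∃ u ∈ (amoeba A c)ᶜ, C = connectedComponentIn (amoeba A c)ᶜ u},
      Function.Injective f := by
  have key : ∀ v : {v // v ∈ Set.extremePoints ℝ (newton A)}, ∃ α ∈ A, Int.cast ∘ α = v.1 ∧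
      ∃ u, ∑ β ∈ A.erase α, ‖torusCoeff c u β‖ < ‖torusCoeff c u α‖ := fun v => by
    obtain ⟨α, hα, hαv, w, hw⟩ := exists_dotProduct_lt_of_mem_extremePoints_newton A v.2
    exact ⟨α, hα, hαv, exists_torusCoeff_dominant A c (hc α hα) hw⟩
  choose α hα hαv u hu using key
  have hu_compl v : u v ∈ (amoeba A c)ᶜ := notMem_amoeba_of_dominant A c (hα v) (hu v)
  refine ⟨fun v => ⟨connectedComponentIn _ (u v), u v, hu_compl v, rfl⟩, fun v v' hvv' => ?_⟩
  have hu' : u v' ∈ connectedComponentIn (amoeba A c)ᶜ (u v) := by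
    rw [show connectedComponentIn _ (u v) = _ from congrArg Subtype.val hvv']
    exact mem_connectedComponentIn (hu_compl v')
  have hαα' : α v = α v' := funext fun j => by
    have := isPreconnected_connectedComponentIn.windingIntegral_trigPoly_torusCoeff_eq A c
      (connectedComponentIn_subset _ _) (mem_connectedComponentIn (hu_compl v)) hu' j
    rwa [windingIntegral_trigPoly_of_dominant _ _ (hα v) (hu v),
      windingIntegral_trigPoly_of_dominant _ _ (hα v') (hu v'),
      mul_left_inj' two_pi_I_ne_zero, Int.cast_inj] at this
  exact Subtype.ext (by rw [← hαv v, ← hαv v', hαα'])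

/-- The number of connected components of the amoeba complement is at least
the number of vertices (extreme points) of the Newton polytope: there is an
injection from the set of vertices into the set of connected components. -/
theorem stmt_1 {n : ℕ} (A : Finset (Fin n → ℤ)) (c : (Fin n → ℤ) → ℂ)
    (hA : A.Nonempty) (hc : ∀ α ∈ A, c α ≠ 0) :
    ∃ f : {v : Fin n → ℝ // v ∈ Set.extremePoints ℝ (newton A)} →
      {C : Set (Fin n → ℝ) //
        ∃ u ∈ (amoeba A c)ᶜ, C = connectedComponentIn (amoeba A c)ᶜ u},
      Function.Injective f :=
  stmt_1_general A c hc
end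

section
/- The boundary of the amoeba is contained in its contour: if x belongs to the topological boundary ∂𝒜_p of the amoeba, then there exists z ∈ (ℂ*)^n with p(z) = 0, Log(z) = x, and z a critical point of Log restricted to the zero locus of p; equivalently, the logarithmic gradient vector (z_1 ∂p/∂z_1(z), …, z_n ∂p/∂z_n(z)) ∈ ℂ^n is a complex scalar multiple of a vector with all real coordinates. -/
open MeasureTheory Real

/-!
In logarithmic coordinates `z = exp w` the amoeba is the image under `w ↦ Re w` of the zero set
of `F(w) = p(exp w)`, whose complex gradient at `w` is the logarithmic gradient `g` of `p` at
`exp w`. If `g` spans `ℂ` over `ℝ`, the real derivative `v ↦ (Re v, ∑ gⱼ vⱼ)` of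
`w ↦ (Re w, F w)` is onto, so by the surjective inverse function theorem this map is open at a
zero, and every real part near `Re w` is the real part of a zero: `Log z` is interior.
The amoeba is closed, being the projection of a closed subset of `ℝⁿ × (S¹)ⁿ`, so a boundary
point is `Log z` for a zero `z` at which `g` does not span `ℂ`; then all `gⱼ` lie on one real
line `ℝ λ`.
-/

open Topology

open Complex in
theorem Complex.span_real_eq_top_or_exists_eq_mul_ofReal {ι : Type*} (g : ι → ℂ) :
    Submodule.span ℝ (Set.range g) = ⊤ ∨ ∃ (lam : ℂ) (v : ι → ℝ), ∀ j, g j = lam * v j := by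
  refine or_iff_not_imp_left.2 fun hg => ?_
  have hrank : Module.finrank ℝ (Submodule.span ℝ (Set.range g)) ≤ 1 := by
    have := Submodule.finrank_lt hg
    rw [finrank_real_complex] at this
    omega
  obtain ⟨lam, hlam⟩ := (Submodule.finrank_le_one_iff_isPrincipal _).1 hrank
  have hmem (j : ι) : ∃ r : ℝ, r • lam = g j :=
    Submodule.mem_span_singleton.1 (hlam ▸ Submodule.subset_span (Set.mem_range_self j))
  choose v hv using hmem
  exact ⟨lam, v, fun j => by rw [← hv j, real_smul, mul_comm]⟩

open Complex in
theorem image_re_setOf_eq_zero_mem_nhds {ι : Type*} [Fintype ι] {F : (ι → ℂ) → ℂ} {g w : ι → ℂ}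
    (hF : HasStrictFDerivAt F
      (∑ j, g j • ContinuousLinearMap.proj (R := ℂ) (φ := fun _ : ι => ℂ) j) w)
    (hw : F w = 0) (hg : Submodule.span ℝ (Set.range g) = ⊤) :
    (fun v i => (v i).re) '' {v | F v = 0} ∈ 𝓝 (fun i => (w i).re) := by
  let re' : (ι → ℂ) →L[ℝ] (ι → ℝ) := .pi fun i => reCLM.comp (.proj i)
  let G' := re'.prod
    ((∑ j, g j • ContinuousLinearMap.proj (R := ℂ) (φ := fun _ : ι => ℂ) j).restrictScalars ℝ)
  have hG : HasStrictFDerivAt (fun v => ((fun i => (v i).re), F v)) G' w :=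
    re'.hasStrictFDerivAt.prodMk (hF.restrictScalars ℝ)
  have hG'_apply (v : ι → ℂ) : G' v = ((fun i => (v i).re), ∑ j, g j * v j) := by
    simp [G', re']
  have hsurj : G'.range = ⊤ := by
    refine LinearMap.range_eq_top.2 fun ⟨b, s⟩ => ?_
    obtain ⟨t, ht⟩ := (Submodule.mem_span_range_iff_exists_fun ℝ).1
      (hg ▸ Submodule.mem_top : (s - ∑ j, g j * b j) * -I ∈ Submodule.span ℝ (Set.range g))
    simp_rw [real_smul, mul_comm (t _ : ℂ)] at ht
    refine ⟨fun j => b j + t j * I, ?_⟩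
    show G' _ = _
    simp only [hG'_apply, mul_add, ← mul_assoc, Finset.sum_add_distrib, ← Finset.sum_mul,
      Prod.mk.injEq]
    exact ⟨funext fun j => by simp, by linear_combination I * ht + (∑ j, g j * b j - s) * I_sq⟩
  have hzero : {q : (ι → ℝ) × ℂ | q.2 = 0 → q.1 ∈ (fun v i => (v i).re) '' {v | F v = 0}} ∈
      𝓝 ((fun i => (w i).re), F w) := by
    rw [← hG.map_nhds_eq_of_surj hsurj]
    exact Filter.mem_map.2 (Filter.univ_mem' fun v hv => Set.mem_image_of_mem _ hv)
  rw [hw] at hzero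
  exact Filter.mem_of_superset
    ((Continuous.prodMk_left (0 : ℂ)).continuousAt.preimage_mem_nhds hzero) fun _ h => h rfl

theorem prod_exp_zpow {ι : Type*} [Fintype ι] (α : ι → ℤ) (w : ι → ℂ) :
    ∏ i, Complex.exp (w i) ^ α i = Complex.exp (∑ i, α i * w i) := by
  rw [Complex.exp_sum]
  exact Finset.prod_congr rfl fun i _ => (Complex.exp_int_mul (w i) (α i)).symm

theorem Circle.ofReal_exp_mul_ne_zero (r : ℝ) (ζ : Circle) : (Real.exp r : ℂ) * ζ ≠ 0 :=
  mul_ne_zero (Complex.ofReal_ne_zero.2 (Real.exp_pos r).ne') ζ.coe_ne_zero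

noncomputable section LaurentPolynomial

variable {n : ℕ} (A : Finset (Fin n → ℤ)) (c : (Fin n → ℤ) → ℂ)

def logGrad (z : Fin n → ℂ) : Fin n → ℂ :=
  fun j => ∑ α ∈ A, c α * (α j : ℂ) * ∏ i, z i ^ α i

theorem hasStrictFDerivAt_lEval_exp (w : Fin n → ℂ) :
    HasStrictFDerivAt (fun w => lEval A c fun i => Complex.exp (w i))
      (∑ j, logGrad A c (fun i => Complex.exp (w i)) j •
        ContinuousLinearMap.proj (R := ℂ) (φ := fun _ : Fin n => ℂ) j) w := by
  simp only [lEval, logGrad, prod_exp_zpow]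
  have hα (α : Fin n → ℤ) := ((HasStrictFDerivAt.fun_sum (u := Finset.univ) fun i _ =>
    (hasStrictFDerivAt_apply (𝕜 := ℂ) i w).const_mul (α i : ℂ)).cexp).const_mul (c α)
  refine (HasStrictFDerivAt.fun_sum fun α (_ : α ∈ A) => hα α).congr_fderiv ?_
  ext v
  simp only [sum_apply, smul_apply, ContinuousLinearMap.proj_apply, smul_eq_mul, Finset.mul_sum,
    Finset.sum_mul]
  rw [Finset.sum_comm]
  exact Finset.sum_congr rfl fun _ _ => Finset.sum_congr rfl fun _ _ => by ring

theorem amoeba_mem_nhds_of_span_logGrad {z : Fin n → ℂ} (hz : ∀ i, z i ≠ 0)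
    (hp : lEval A c z = 0) (hspan : Submodule.span ℝ (Set.range (logGrad A c z)) = ⊤) :
    amoeba A c ∈ 𝓝 (logMap z) := by
  have hexp : (fun i => Complex.exp (Complex.log (z i))) = z :=
    funext fun i => Complex.exp_log (hz i)
  have hre : (fun i => (Complex.log (z i)).re) = logMap z := funext fun i => Complex.log_re _
  have hnhds := image_re_setOf_eq_zero_mem_nhds
    (hasStrictFDerivAt_lEval_exp A c fun i => Complex.log (z i)) (by rwa [hexp]) (by rwa [hexp])
  rw [hre] at hnhds
  refine Filter.mem_of_superset hnhds ?_
  rintro _ ⟨w, hw, rfl⟩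
  exact ⟨fun i => Complex.exp (w i), ⟨fun i => Complex.exp_ne_zero _, hw⟩,
    funext fun i => by simp [logMap, Complex.norm_exp]⟩

theorem continuousOn_lEval : ContinuousOn (lEval A c) {z | ∀ i, z i ≠ 0} :=
  continuousOn_finsetSum _ fun α _ => continuousOn_const.mul <| continuousOn_finsetProd _
    fun i _ => ((continuous_apply i).continuousOn).zpow₀ (α i) fun _ hz => Or.inl (hz i)

theorem amoeba_eq_image_fst : amoeba A c = Prod.fst ''
    {q : (Fin n → ℝ) × (Fin n → Circle) | lEval A c (fun i => Real.exp (q.1 i) * q.2 i) = 0} := by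
  ext x
  constructor
  · rintro ⟨z, ⟨hz, hp⟩, rfl⟩
    refine ⟨(logMap z, fun i => Circle.exp (Complex.arg (z i))), ?_, rfl⟩
    have hpolar (i : Fin n) :
        (Real.exp (logMap z i) : ℂ) * Circle.exp (Complex.arg (z i)) = z i := by
      rw [logMap, Real.exp_log (norm_pos_iff.2 (hz i)), Circle.coe_exp,
        Complex.norm_mul_exp_arg_mul_I]
    simpa only [Set.mem_ofPred_eq, hpolar] using hp
  · rintro ⟨q, hq, rfl⟩
    refine ⟨_, ⟨fun i => Circle.ofReal_exp_mul_ne_zero _ _, hq⟩, funext fun i => ?_⟩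
    simp [logMap, Circle.norm_coe]

theorem isClosed_amoeba : IsClosed (amoeba A c) := by
  rw [amoeba_eq_image_fst]
  refine isClosedMap_fst_of_compactSpace _ (isClosed_eq ?_ continuous_const)
  exact (continuousOn_lEval A c).comp_continuous (by fun_prop) fun q i =>
    Circle.ofReal_exp_mul_ne_zero _ _

end LaurentPolynomial

theorem stmt_18_general {n : ℕ} (A : Finset (Fin n → ℤ)) (c : (Fin n → ℤ) → ℂ)
    (x : Fin n → ℝ) (hx : x ∈ frontier (amoeba A c)) :
    ∃ z : Fin n → ℂ, (∀ i, z i ≠ 0) ∧ lEval A c z = 0 ∧ logMap z = x ∧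
      ∃ (lam : ℂ) (v : Fin n → ℝ), ∀ j,
        (∑ α ∈ A, c α * (α j : ℂ) * ∏ i, z i ^ α i) = lam * (v j : ℂ) := by
  obtain ⟨z, ⟨hz, hp⟩, rfl⟩ : x ∈ amoeba A c := (isClosed_amoeba A c).frontier_subset hx
  refine ⟨z, hz, hp, rfl, ?_⟩
  refine (Complex.span_real_eq_top_or_exists_eq_mul_ofReal (logGrad A c z)).resolve_left
    fun hspan => hx.2 ?_
  exact mem_interior_iff_mem_nhds.2 (amoeba_mem_nhds_of_span_logGrad A c hz hp hspan)

/-- The boundary of the amoeba is contained in its contour: every point of the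
topological boundary of `𝒜_p` is the image under `Log` of a zero `z` of `p`
which is a critical point of `Log` restricted to the zero locus, i.e. the
logarithmic gradient `(z₁ ∂p/∂z₁(z), …, z_n ∂p/∂z_n(z))` is a complex scalar
multiple of a vector with all real coordinates. -/
theorem stmt_18 {n : ℕ} (A : Finset (Fin n → ℤ)) (c : (Fin n → ℤ) → ℂ)
    (hA : A.Nonempty) (hc : ∀ α ∈ A, c α ≠ 0)
    (x : Fin n → ℝ) (hx : x ∈ frontier (amoeba A c)) :
    ∃ z : Fin n → ℂ, (∀ i, z i ≠ 0) ∧ lEval A c z = 0 ∧ logMap z = x ∧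
      ∃ (lam : ℂ) (v : Fin n → ℝ), ∀ j,
        (∑ α ∈ A, c α * (α j : ℂ) * ∏ i, z i ^ α i) = lam * (v j : ℂ) :=
  stmt_18_general A c x hx
end
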